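/- Let X be an F₂-valued random variable, Z a random variable with values in a finite set, and (S1,S2) a pair of {0,1}-valued random variables with the pair (S1,S2) independent of (X,Z) and P(S2=1) > 0. Define Y1 = S1·X and Y2 = S2·X. Then H[Y1 | (Z,S1,S2)] ≤ (P(S1=1 or S2=1)/P(S2=1)) · H[Y2 | (Z,S1,S2)]. -/

import Mathlib

open Finset
open scoped Classical

/-- Probability of an event under a probability mass function on a finite sample space. -/
noncomputable def pr {Ω : Type} [Fintype Ω] (p : Ω → ℝ) (E : Ω → Prop) : ℝ :=
  ∑ ω, if E ω then p ω else 0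

/-- Conditional Shannon entropy `H[X | Y] = Σ_y P(Y=y) · H[X | Y=y]`
(natural logarithm), for finite-valued random variables on a finite sample space. -/
noncomputable def condEnt {Ω : Type} [Fintype Ω] {α β : Type} [Fintype α] [Fintype β]
    (p : Ω → ℝ) (X : Ω → α) (Y : Ω → β) : ℝ :=
  ∑ y : β, pr p (fun ω => Y ω = y) *
    ∑ x : α, Real.negMulLog
      (pr p (fun ω => X ω = x ∧ Y ω = y) / pr p (fun ω => Y ω = y))

/-!
Conditioning on `(Z, S1, S2)` splits the sample space into cells. On a cell where the state `S`
is `1` the output `S·X` is `X`, and since the states are independent of `(X, Z)` its conditional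
law there is that of `X` given `Z`; on a cell where `S` is `0` the output is constant. Hence
`H[S·X | Z, S1, S2] = P(S = 1) · H[X | Z]` for `S ∈ {S1, S2}`, and the claim reduces to
`P(S1 = 1) ≤ P(S1 = 1 ∨ S2 = 1)`.
-/

noncomputable def weightedEnt {α : Type} [Fintype α] (c : ℝ) (f : α → ℝ) : ℝ :=
  c * ∑ x, Real.negMulLog (f x / c)

section WeightedEnt

variable {α : Type} [Fintype α]

theorem weightedEnt_mul (a c : ℝ) (f : α → ℝ) :
    weightedEnt (a * c) (fun x => a * f x) = a * weightedEnt c f := by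
  by_cases ha : a = 0
  · simp [weightedEnt, ha]
  · simp only [weightedEnt, mul_div_mul_left _ _ ha]
    ring

theorem weightedEnt_ite_eq (x₀ : α) (c : ℝ) :
    weightedEnt c (fun x => if x = x₀ then c else 0) = 0 := by
  by_cases hc : c = 0
  · simp [weightedEnt, hc]
  · rw [weightedEnt, Finset.sum_eq_single x₀ (fun x _ hx => by simp [hx]) (by simp)]
    simp [div_self hc]

theorem weightedEnt_nonneg {c : ℝ} {f : α → ℝ} (hc : 0 ≤ c) (hf : ∀ x, 0 ≤ f x ∧ f x ≤ c) :
    0 ≤ weightedEnt c f := by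
  refine mul_nonneg hc (Finset.sum_nonneg fun x _ => Real.negMulLog_nonneg ?_ ?_)
  · exact div_nonneg (hf x).1 hc
  · rcases hc.eq_or_lt with hc0 | hcpos
    · simp [← hc0]
    · exact div_le_one_of_le₀ (hf x).2 hcpos.le

end WeightedEnt

section Probability

variable {Ω : Type} [Fintype Ω]

theorem pr_congr (p : Ω → ℝ) {E F : Ω → Prop} (h : ∀ ω, E ω ↔ F ω) : pr p E = pr p F :=
  Finset.sum_congr rfl fun ω _ => by simp only [h ω]

theorem pr_nonneg {p : Ω → ℝ} (hp : ∀ ω, 0 ≤ p ω) (E : Ω → Prop) : 0 ≤ pr p E :=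
  Finset.sum_nonneg fun ω _ => by split_ifs <;> simp [hp ω]

theorem pr_mono {p : Ω → ℝ} (hp : ∀ ω, 0 ≤ p ω) {E F : Ω → Prop} (h : ∀ ω, E ω → F ω) :
    pr p E ≤ pr p F :=
  Finset.sum_le_sum fun ω _ => by
    by_cases hE : E ω
    · simp [hE, h ω hE]
    · split_ifs <;> simp [hp ω]

theorem pr_eq_sum_pr_and {β : Type} [Fintype β] (p : Ω → ℝ) (E : Ω → Prop) (W : Ω → β) :
    pr p E = ∑ b, pr p (fun ω => E ω ∧ W ω = b) := by
  unfold pr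
  rw [Finset.sum_comm]
  refine Finset.sum_congr rfl fun ω _ => ?_
  by_cases h : E ω <;> simp [h]

theorem pr_comp_eq_sum {τ : Type} [Fintype τ] (p : Ω → ℝ) (T : Ω → τ) (g : τ → Prop) :
    pr p (fun ω => g (T ω)) = ∑ t, if g t then pr p (fun ω => T ω = t) else 0 := by
  rw [pr_eq_sum_pr_and p _ T]
  refine Finset.sum_congr rfl fun t _ => ?_
  split_ifs with ht
  · exact pr_congr p fun ω => ⟨And.right, fun h => ⟨h ▸ ht, h⟩⟩
  · simp only [pr]
    exact Finset.sum_eq_zero fun ω _ => if_neg fun h : g (T ω) ∧ T ω = t => ht (h.2 ▸ h.1)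

theorem condEnt_eq_sum_weightedEnt {α β : Type} [Fintype α] [Fintype β]
    (p : Ω → ℝ) (X : Ω → α) (Y : Ω → β) :
    condEnt p X Y = ∑ y, weightedEnt (pr p (fun ω => Y ω = y))
      (fun x => pr p (fun ω => X ω = x ∧ Y ω = y)) :=
  rfl

theorem condEnt_nonneg {α β : Type} [Fintype α] [Fintype β]
    {p : Ω → ℝ} (hp : ∀ ω, 0 ≤ p ω) (X : Ω → α) (Y : Ω → β) : 0 ≤ condEnt p X Y := by
  rw [condEnt_eq_sum_weightedEnt]
  exact Finset.sum_nonneg fun y _ => weightedEnt_nonneg (pr_nonneg hp _)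
    fun x => ⟨pr_nonneg hp _, pr_mono hp fun ω h => h.2⟩

end Probability

section Erasure

variable {Ω α γ τ : Type} [Fintype Ω] (p : Ω → ℝ) (X : Ω → α) (Z : Ω → γ) (T : Ω → τ)

theorem pr_pair_eq_mul [Fintype α]
    (hindep : ∀ t x z, pr p (fun ω => T ω = t ∧ X ω = x ∧ Z ω = z)
      = pr p (fun ω => T ω = t) * pr p (fun ω => X ω = x ∧ Z ω = z))
    (z : γ) (t : τ) :
    pr p (fun ω => (Z ω, T ω) = (z, t)) = pr p (fun ω => T ω = t) * pr p (fun ω => Z ω = z) := by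
  rw [pr_eq_sum_pr_and p _ X, pr_eq_sum_pr_and p (fun ω => Z ω = z) X, Finset.mul_sum]
  refine Finset.sum_congr rfl fun x _ => ?_
  rw [pr_congr p fun ω => (and_comm : Z ω = z ∧ X ω = x ↔ _), ← hindep]
  exact pr_congr p fun ω => by simp only [Prod.mk.injEq]; tauto

variable [Zero α] (g : τ → Bool)

theorem pr_erasure_of_on
    (hindep : ∀ t x z, pr p (fun ω => T ω = t ∧ X ω = x ∧ Z ω = z)
      = pr p (fun ω => T ω = t) * pr p (fun ω => X ω = x ∧ Z ω = z))
    {t : τ} (ht : g t = true) (x : α) (z : γ) :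
    pr p (fun ω => (if g (T ω) then X ω else 0) = x ∧ (Z ω, T ω) = (z, t))
      = pr p (fun ω => T ω = t) * pr p (fun ω => X ω = x ∧ Z ω = z) := by
  rw [← hindep]
  refine pr_congr p fun ω => ?_
  by_cases hT : T ω = t
  · simp [hT, ht]
  · simp [hT]

theorem pr_erasure_of_off [Fintype α]
    (hindep : ∀ t x z, pr p (fun ω => T ω = t ∧ X ω = x ∧ Z ω = z)
      = pr p (fun ω => T ω = t) * pr p (fun ω => X ω = x ∧ Z ω = z))
    {t : τ} (ht : g t = false) (x : α) (z : γ) :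
    pr p (fun ω => (if g (T ω) then X ω else 0) = x ∧ (Z ω, T ω) = (z, t))
      = if x = 0 then pr p (fun ω => T ω = t) * pr p (fun ω => Z ω = z) else 0 := by
  split_ifs with hx
  · rw [← pr_pair_eq_mul p X Z T hindep]
    refine pr_congr p fun ω => ?_
    by_cases hT : T ω = t
    · simp [hT, ht, hx]
    · simp [hT]
  · simp only [pr]
    refine Finset.sum_eq_zero fun ω _ => if_neg ?_
    rintro ⟨hY, hZT⟩
    simp only [Prod.mk.injEq] at hZT
    simp [hZT.2, ht, eq_comm, hx] at hY

theorem condEnt_erasure [Fintype α] [Fintype γ] [Fintype τ]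
    (hindep : ∀ t x z, pr p (fun ω => T ω = t ∧ X ω = x ∧ Z ω = z)
      = pr p (fun ω => T ω = t) * pr p (fun ω => X ω = x ∧ Z ω = z)) :
    condEnt p (fun ω => if g (T ω) then X ω else 0) (fun ω => (Z ω, T ω))
      = pr p (fun ω => g (T ω) = true) * condEnt p X Z := by
  rw [condEnt_eq_sum_weightedEnt, condEnt_eq_sum_weightedEnt, Fintype.sum_prod_type,
    Finset.mul_sum, pr_comp_eq_sum p T (fun t => g t = true)]
  refine Finset.sum_congr rfl fun z _ => ?_
  rw [Finset.sum_mul]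
  refine Finset.sum_congr rfl fun t _ => ?_
  rw [pr_pair_eq_mul p X Z T hindep]
  cases ht : g t
  · simp only [pr_erasure_of_off p X Z T g hindep ht, weightedEnt_ite_eq]
    simp
  · simp only [pr_erasure_of_on p X Z T g hindep ht, weightedEnt_mul]
    simp

end Erasure

theorem erasure_condEntropy_ratio_general {Ω γ : Type} [Fintype Ω] [Fintype γ]
    (p : Ω → ℝ) (hp : ∀ ω, 0 ≤ p ω)
    (X : Ω → ZMod 2) (Z : Ω → γ) (S1 S2 : Ω → Bool)
    (hindep : ∀ (s1 s2 : Bool) (x : ZMod 2) (z : γ),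
      pr p (fun ω => (S1 ω = s1 ∧ S2 ω = s2) ∧ X ω = x ∧ Z ω = z)
        = pr p (fun ω => S1 ω = s1 ∧ S2 ω = s2) *
          pr p (fun ω => X ω = x ∧ Z ω = z))
    (hS2pos : 0 < pr p (fun ω => S2 ω = true)) :
    condEnt p (fun ω => (if S1 ω then X ω else 0 : ZMod 2))
        (fun ω => (Z ω, S1 ω, S2 ω))
      ≤ (pr p (fun ω => S1 ω = true ∨ S2 ω = true) / pr p (fun ω => S2 ω = true)) *
        condEnt p (fun ω => (if S2 ω then X ω else 0 : ZMod 2))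
          (fun ω => (Z ω, S1 ω, S2 ω)) := by
  have hindep' : ∀ t x z, pr p (fun ω => (S1 ω, S2 ω) = t ∧ X ω = x ∧ Z ω = z)
      = pr p (fun ω => (S1 ω, S2 ω) = t) * pr p (fun ω => X ω = x ∧ Z ω = z) := by
    rintro ⟨s1, s2⟩ x z
    simpa only [Prod.mk.injEq] using hindep s1 s2 x z
  calc condEnt p (fun ω => (if S1 ω then X ω else 0 : ZMod 2)) (fun ω => (Z ω, S1 ω, S2 ω))
      = pr p (fun ω => S1 ω = true) * condEnt p X Z :=
        condEnt_erasure p X Z (fun ω => (S1 ω, S2 ω)) Prod.fst hindep'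
    _ ≤ pr p (fun ω => S1 ω = true ∨ S2 ω = true) * condEnt p X Z :=
        mul_le_mul_of_nonneg_right (pr_mono hp fun ω => Or.inl) (condEnt_nonneg hp X Z)
    _ = (pr p (fun ω => S1 ω = true ∨ S2 ω = true) / pr p (fun ω => S2 ω = true)) *
          (pr p (fun ω => S2 ω = true) * condEnt p X Z) := by
        field_simp
    _ = _ := by
        rw [condEnt_erasure p X Z (fun ω => (S1 ω, S2 ω)) Prod.snd hindep']

/-- Single-letter form of Claim 2: for erasure channels `Y1 = S1·X`, `Y2 = S2·X` with
states `(S1,S2)` independent of `(X,Z)` and `P(S2=1) > 0`,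
`H[Y1 | (Z,S1,S2)] ≤ (P(S1=1 or S2=1)/P(S2=1)) · H[Y2 | (Z,S1,S2)]`. -/
theorem erasure_condEntropy_ratio {Ω γ : Type} [Fintype Ω] [Fintype γ]
    (p : Ω → ℝ) (hp : ∀ ω, 0 ≤ p ω) (hsum : ∑ ω, p ω = 1)
    (X : Ω → ZMod 2) (Z : Ω → γ) (S1 S2 : Ω → Bool)
    (hindep : ∀ (s1 s2 : Bool) (x : ZMod 2) (z : γ),
      pr p (fun ω => (S1 ω = s1 ∧ S2 ω = s2) ∧ X ω = x ∧ Z ω = z)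
        = pr p (fun ω => S1 ω = s1 ∧ S2 ω = s2) *
          pr p (fun ω => X ω = x ∧ Z ω = z))
    (hS2pos : 0 < pr p (fun ω => S2 ω = true)) :
    condEnt p (fun ω => (if S1 ω then X ω else 0 : ZMod 2))
        (fun ω => (Z ω, S1 ω, S2 ω))
      ≤ (pr p (fun ω => S1 ω = true ∨ S2 ω = true) / pr p (fun ω => S2 ω = true)) *
        condEnt p (fun ω => (if S2 ω then X ω else 0 : ZMod 2))
          (fun ω => (Z ω, S1 ω, S2 ω)) :=
  erasure_condEntropy_ratio_general p hp X Z S1 S2 hindep hS2pos
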